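/- The quandle R̃_{2n+1} = (G_{2n+1}, C(a), a) is not involutory for any n ≥ 1: specifically (Ha ◁ Hb) ◁ Hb ≠ Ha, because b⁻¹ a² b = diag(−1, 1, −1, −1, …, −1) (the diagonal sign matrix with +1 only in position 2) does not lie in H = C(a). In particular R̃_{2n+1} is not isomorphic to any dihedral quandle R_m. -/

import Mathlib

/-- The signed permutation matrix `a = (1, 2n+1, 2n, …, n+2, −(n+1), …, −3, −2)`
(column `j` is `ε_j e_{σ(j)}`), written with 0-based indices. -/
def Amat (n : ℕ) : Matrix (Fin (2*n+1)) (Fin (2*n+1)) ℤ := fun i j =>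
  if (j : ℕ) = 0 then (if (i : ℕ) = 0 then 1 else 0)
  else if (i : ℕ) = 2*n+1 - (j : ℕ) then (if (j : ℕ) ≤ n then 1 else -1) else 0

/-- The cyclic permutation matrix `b = (2n+1, 1, 2, …, 2n)`, with 0-based indices:
column `j` is `e_{j-1 (mod 2n+1)}`. -/
def Bmat (n : ℕ) : Matrix (Fin (2*n+1)) (Fin (2*n+1)) ℤ := fun i j =>
  if i = j - 1 then 1 else 0

/-- The group `G_{2n+1}` generated by `a` and `b`. -/
def Gp (n : ℕ) (a b : Matrix.SpecialLinearGroup (Fin (2*n+1)) ℤ) :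
    Subgroup (Matrix.SpecialLinearGroup (Fin (2*n+1)) ℤ) :=
  Subgroup.closure {a, b}

theorem mem_a (n : ℕ) (a b : Matrix.SpecialLinearGroup (Fin (2*n+1)) ℤ) : a ∈ Gp n a b :=
  Subgroup.subset_closure (Set.mem_insert _ _)

theorem mem_b (n : ℕ) (a b : Matrix.SpecialLinearGroup (Fin (2*n+1)) ℤ) : b ∈ Gp n a b :=
  Subgroup.subset_closure (Set.mem_insert_of_mem _ rfl)

/-- The subgroup `H = C(a)` of `G_{2n+1}`. -/
def Hc (n : ℕ) (a b : Matrix.SpecialLinearGroup (Fin (2*n+1)) ℤ) : Subgroup ↥(Gp n a b) :=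
  (Subgroup.centralizer {a}).subgroupOf (Gp n a b)

/-!
With 0-based indices, `a` is the signed permutation matrix of `j ↦ -j` in `ℤ/(2n+1)`, and the
two entries of every 2-cycle `{j, -j}` carry opposite signs, so `a²` is the sign matrix with
`+1` only in position 0. Conjugation by the cyclic shift `b` moves that `+1` to position 1.
The diagonal matrix `b⁻¹a²b` commutes with `a` only if it is constant on each pair `{j, -j}`,
which fails for `{1, 2n}`. As `a ∈ H`, `(Ha ◁ Hb) ◁ Hb = H a (b⁻¹a²b)` equals `Ha` exactly when
`b⁻¹a²b ∈ H`, so the quandle is not involutory, while every dihedral quandle is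
(`2y - (2y - x) = x`).
-/

open Matrix

def amatSign (n : ℕ) (j : Fin (2*n+1)) : ℤ := if (j : ℕ) ≤ n then 1 else -1

lemma Amat_apply {n : ℕ} (i j : Fin (2*n+1)) :
    Amat n i j = if i = -j then amatSign n j else 0 := by
  rcases eq_or_ne j 0 with rfl | hj
  · simp only [Amat, amatSign, neg_zero, Fin.val_zero, Fin.val_eq_zero_iff]
    simp
  · have hj' : (j : ℕ) ≠ 0 := Fin.val_ne_iff.mpr hj
    have hneg : ((-j : Fin (2*n+1)) : ℕ) = 2*n+1 - j := by
      rw [Fin.val_neg', Nat.mod_eq_of_lt (by omega)]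
    simp [Amat, amatSign, hj', Fin.ext_iff, hneg]

lemma amatSign_neg_mul_amatSign {n : ℕ} (j : Fin (2*n+1)) :
    amatSign n (-j) * amatSign n j = if j = 0 then 1 else -1 := by
  rcases eq_or_ne j 0 with rfl | hj
  · simp [amatSign]
  · have hj' : (j : ℕ) ≠ 0 := Fin.val_ne_iff.mpr hj
    have hneg : ((-j : Fin (2*n+1)) : ℕ) = 2*n+1 - j := by
      rw [Fin.val_neg', Nat.mod_eq_of_lt (by omega)]
    have := j.isLt
    simp only [amatSign, hneg, if_neg hj]
    split_ifs <;> omega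

def signDiag (n k : ℕ) : Matrix (Fin (2*n+1)) (Fin (2*n+1)) ℤ :=
  diagonal fun i => if (i : ℕ) = k then 1 else -1

lemma Amat_mul_Amat (n : ℕ) : Amat n * Amat n = signDiag n 0 := by
  ext i j
  simp only [signDiag, Fin.val_eq_zero_iff]
  rcases eq_or_ne i j with rfl | hij
  · simp [mul_apply, Amat_apply, amatSign_neg_mul_amatSign]
  · simp [mul_apply, Amat_apply, hij]

lemma Bmat_mul_transpose (n : ℕ) : Bmat n * (Bmat n)ᵀ = 1 := by
  ext i j
  simp [mul_apply, Bmat, one_apply, eq_sub_iff_add_eq]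

lemma transpose_Bmat_mul_mul_Bmat (n : ℕ) (M : Matrix (Fin (2*n+1)) (Fin (2*n+1)) ℤ) :
    (Bmat n)ᵀ * M * Bmat n = M.submatrix (· - 1) (· - 1) := by
  ext i j
  simp [mul_apply, Bmat]

lemma transpose_Bmat_mul_Amat_sq_mul_Bmat {n : ℕ} (hn : 0 < n) :
    (Bmat n)ᵀ * (Amat n * Amat n) * Bmat n = signDiag n 1 := by
  have hone : ((1 : Fin (2*n+1)) : ℕ) = 1 := by
    rw [Fin.val_one', Nat.mod_eq_of_lt (by omega)]
  rw [transpose_Bmat_mul_mul_Bmat, Amat_mul_Amat, signDiag, signDiag]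
  refine (submatrix_diagonal_equiv _ (Equiv.subRight 1)).trans
    (congrArg diagonal (funext fun i => ?_))
  have hi : i - 1 = 0 ↔ (i : ℕ) = 1 := by rw [sub_eq_zero, Fin.ext_iff, hone]
  simp only [Function.comp_apply, Equiv.subRight_apply, Fin.val_eq_zero_iff, hi]

lemma Matrix.eq_of_mul_diagonal_eq_diagonal_mul {ι R : Type*} [Fintype ι] [DecidableEq ι]
    [CommRing R] [NoZeroDivisors R] {A : Matrix ι ι R} {d : ι → R}
    (h : A * diagonal d = diagonal d * A) {i j : ι} (hij : A i j ≠ 0) : d i = d j := by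
  have hij' := congrFun (congrFun h i) j
  rw [mul_diagonal, diagonal_mul, mul_comm] at hij'
  exact (mul_right_cancel₀ hij hij').symm

lemma Amat_mul_signDiag_one_ne {n : ℕ} (hn : 0 < n) :
    Amat n * signDiag n 1 ≠ signDiag n 1 * Amat n := by
  intro h
  have hA : Amat n 1 (-1) ≠ 0 := by
    rw [Amat_apply, if_pos (neg_neg 1).symm, amatSign]
    split_ifs <;> norm_num
  have hone : ((1 : Fin (2*n+1)) : ℕ) = 1 := by
    rw [Fin.val_one', Nat.mod_eq_of_lt (by omega)]
  have hd := eq_of_mul_diagonal_eq_diagonal_mul h hA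
  simp only [hone, Fin.coe_neg_one] at hd
  split_ifs at hd <;> omega

section SpecialLinearGroup

variable {n : ℕ} {a b : Matrix.SpecialLinearGroup (Fin (2*n+1)) ℤ}

lemma coe_inv_eq_transpose_Bmat (hb : (b : Matrix (Fin (2*n+1)) (Fin (2*n+1)) ℤ) = Bmat n) :
    ((b⁻¹ : Matrix.SpecialLinearGroup (Fin (2*n+1)) ℤ) :
      Matrix (Fin (2*n+1)) (Fin (2*n+1)) ℤ) = (Bmat n)ᵀ :=
  left_inv_eq_right_inv
    (by rw [← hb, ← Matrix.SpecialLinearGroup.coe_mul, inv_mul_cancel,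
      Matrix.SpecialLinearGroup.coe_one])
    (Bmat_mul_transpose n)

lemma coe_conj_sq_eq_signDiag (hn : 0 < n)
    (ha : (a : Matrix (Fin (2*n+1)) (Fin (2*n+1)) ℤ) = Amat n)
    (hb : (b : Matrix (Fin (2*n+1)) (Fin (2*n+1)) ℤ) = Bmat n) :
    ((b⁻¹ * a^2 * b : Matrix.SpecialLinearGroup (Fin (2*n+1)) ℤ) :
      Matrix (Fin (2*n+1)) (Fin (2*n+1)) ℤ) = signDiag n 1 := by
  rw [Matrix.SpecialLinearGroup.coe_mul, Matrix.SpecialLinearGroup.coe_mul,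
    Matrix.SpecialLinearGroup.coe_pow, sq, coe_inv_eq_transpose_Bmat hb, ha, hb, transpose_Bmat_mul_Amat_sq_mul_Bmat hn]

lemma conj_sq_not_mem_centralizer (hn : 0 < n)
    (ha : (a : Matrix (Fin (2*n+1)) (Fin (2*n+1)) ℤ) = Amat n)
    (hb : (b : Matrix (Fin (2*n+1)) (Fin (2*n+1)) ℤ) = Bmat n) :
    b⁻¹ * a^2 * b ∉ Subgroup.centralizer {a} := by
  intro hC
  have hcomm := congrArg (fun g : Matrix.SpecialLinearGroup (Fin (2*n+1)) ℤ =>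
    (g : Matrix (Fin (2*n+1)) (Fin (2*n+1)) ℤ)) (Subgroup.mem_centralizer_singleton_iff.mp hC)
  simp only [Matrix.SpecialLinearGroup.coe_mul, coe_conj_sq_eq_signDiag hn ha hb, ha] at hcomm
  exact Amat_mul_signDiag_one_ne hn hcomm.symm

end SpecialLinearGroup

theorem QuotientGroup.rightRel_mk_mul_eq_mk_iff {G : Type*} [Group G] {H : Subgroup G} {u : G}
    (hu : u ∈ H) (g : G) :
    Quotient.mk (QuotientGroup.rightRel H) (u * g) = Quotient.mk _ u ↔ g ∈ H := by
  rw [Quotient.eq, QuotientGroup.rightRel_apply, _root_.mul_inv_rev, ← mul_assoc,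
    H.mul_mem_cancel_right (inv_mem hu), H.mul_mem_cancel_left hu, inv_mem_iff]

/-- `R̃_{2n+1}` is not involutory: `b⁻¹ a² b` is the diagonal sign matrix with `+1`
only in position 2 (0-based index 1), it does not lie in `H = C(a)`, and hence
`(Ha ◁ Hb) ◁ Hb ≠ Ha`, where `Hu ◁ Hv = H u v⁻¹ a v`.  In particular `R̃_{2n+1}` is not
isomorphic to any dihedral quandle `R_m`. -/
theorem tilde_R_not_involutory (n : ℕ) (hn : 0 < n)
    (a b : Matrix.SpecialLinearGroup (Fin (2*n+1)) ℤ)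
    (ha : (a : Matrix (Fin (2*n+1)) (Fin (2*n+1)) ℤ) = Amat n)
    (hb : (b : Matrix (Fin (2*n+1)) (Fin (2*n+1)) ℤ) = Bmat n) :
    (((b⁻¹ * a^2 * b : Matrix.SpecialLinearGroup (Fin (2*n+1)) ℤ) :
        Matrix (Fin (2*n+1)) (Fin (2*n+1)) ℤ)
      = Matrix.of fun i j : Fin (2*n+1) => if i = j then (if (i : ℕ) = 1 then 1 else -1) else 0) ∧
    b⁻¹ * a^2 * b ∉ Subgroup.centralizer {a} ∧
    (Quotient.mk (QuotientGroup.rightRel (Hc n a b))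
        ((⟨a, mem_a n a b⟩ * ⟨b, mem_b n a b⟩⁻¹ * ⟨a, mem_a n a b⟩ * ⟨b, mem_b n a b⟩)
          * ⟨b, mem_b n a b⟩⁻¹ * ⟨a, mem_a n a b⟩ * ⟨b, mem_b n a b⟩)
      ≠ Quotient.mk (QuotientGroup.rightRel (Hc n a b)) ⟨a, mem_a n a b⟩) ∧
    ¬ ∃ (m : ℕ) (e : Quotient (QuotientGroup.rightRel (Hc n a b)) ≃ ZMod m),
        ∀ u v : ↥(Gp n a b),
          e (Quotient.mk (QuotientGroup.rightRel (Hc n a b))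
              (u * v⁻¹ * ⟨a, mem_a n a b⟩ * v))
            = 2 * e (Quotient.mk (QuotientGroup.rightRel (Hc n a b)) v)
              - e (Quotient.mk (QuotientGroup.rightRel (Hc n a b)) u) := by
  set a' : Gp n a b := ⟨a, mem_a n a b⟩
  set b' : Gp n a b := ⟨b, mem_b n a b⟩
  have ha' : a' ∈ Hc n a b :=
    Subgroup.mem_subgroupOf.mpr (Subgroup.mem_centralizer_singleton_iff.mpr rfl)
  have hcoset : Quotient.mk (QuotientGroup.rightRel (Hc n a b))
      (a' * b'⁻¹ * a' * b' * b'⁻¹ * a' * b') ≠ Quotient.mk _ a' := by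
    rw [Ne, show a' * b'⁻¹ * a' * b' * b'⁻¹ * a' * b' = a' * (b'⁻¹ * a'^2 * b') by
        simp only [sq, mul_assoc, mul_inv_cancel_left],
      QuotientGroup.rightRel_mk_mul_eq_mk_iff ha']
    exact conj_sq_not_mem_centralizer hn ha hb
  refine ⟨coe_conj_sq_eq_signDiag hn ha hb, conj_sq_not_mem_centralizer hn ha hb, hcoset, ?_⟩
  rintro ⟨m, e, he⟩
  exact hcoset (e.injective (by rw [he, he]; ring))
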